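/- arXiv:gr-qc/9506031 — 2 statements merged into one kernel-verified Lean document; each statement's English description precedes it below -/
import Mathlib

section
/- Let R be an η-symmetric linear operator on ℝ^5 and λ1, λ2 ∈ ℝ (possibly equal). Then there do not exist vectors X1, X2, X3, X4, X5 forming a basis of ℝ^5 and satisfying the Jordan chain relations R X1 = λ1 X1, R X2 = λ1 X2 + X1, R X3 = λ1 X3 + X2, R X4 = λ2 X4, R X5 = λ2 X5 + X4. (A second order symmetric tensor on a 5-dimensional Lorentzian space cannot have Segre type [32] or its degeneracy [(32)].) -/
/-!
For an η-symmetric `R`, the eigenvector `X1` heading a Jordan chain `X1, X2` is null, and it is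
η-orthogonal to every eigenvector of `R`, whatever its eigenvalue. Hence `X1` and `X4` are
orthogonal null vectors; in Lorentzian signature such vectors are proportional, contradicting
linear independence.
-/

def eta (u v : Fin 5 → ℝ) : ℝ :=
  -u 0 * v 0 + u 1 * v 1 + u 2 * v 2 + u 3 * v 3 + u 4 * v 4

namespace LinearMap

variable {K V : Type*} [CommRing K] [AddCommGroup V] [Module K V]
  {B : LinearMap.BilinForm K V} {T : V →ₗ[K] V} {a b : K} {x y z : V}

theorem IsSelfAdjoint.apply_self_eq_zero_of_jordan_chain (hT : B.IsSelfAdjoint T)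
    (hx : T x = a • x) (hy : T y = a • y + x) : B x x = 0 := by
  have h := hT x y
  rw [hx, hy] at h
  simpa using h

theorem IsSelfAdjoint.apply_eq_zero_of_jordan_chain_of_eigenvector [NoZeroDivisors K]
    (hT : B.IsSelfAdjoint T) (hx : T x = a • x) (hy : T y = a • y + x) (hz : T z = b • z) :
    B x z = 0 := by
  have hxz := hT x z
  have hyz := hT y z
  rw [hx, hz] at hxz
  rw [hy, hz] at hyz
  simp only [map_smul, map_add, smul_apply, add_apply, smul_eq_mul] at hxz hyz
  refine pow_eq_zero_iff two_ne_zero |>.mp ?_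
  linear_combination (B x z) * hyz - (B y z) * hxz

end LinearMap

def etaBilin : LinearMap.BilinForm ℝ (Fin 5 → ℝ) :=
  LinearMap.mk₂ ℝ eta (fun _ _ _ => by simp only [eta, Pi.add_apply]; ring)
    (fun _ _ _ => by simp only [eta, Pi.smul_apply, smul_eq_mul]; ring)
    (fun _ _ _ => by simp only [eta, Pi.add_apply]; ring)
    (fun _ _ _ => by simp only [eta, Pi.smul_apply, smul_eq_mul]; ring)

theorem eq_zero_of_eta_self_eq_zero {w : Fin 5 → ℝ} (h0 : w 0 = 0) (hw : eta w w = 0) :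
    w = 0 := by
  have hsum : ∑ i, w i * w i = 0 := by
    simpa [eta, Fin.sum_univ_five, h0] using hw
  funext i
  exact mul_self_eq_zero.mp
    ((Finset.sum_eq_zero_iff_of_nonneg fun j _ => mul_self_nonneg (w j)).mp hsum i
      (Finset.mem_univ i))

theorem eta_smul_sub_smul_self (s t : ℝ) (x y : Fin 5 → ℝ) :
    eta (s • x - t • y) (s • x - t • y) =
      s ^ 2 * eta x x - 2 * s * t * eta x y + t ^ 2 * eta y y := by
  simp only [eta, Pi.sub_apply, Pi.smul_apply, smul_eq_mul]
  ring

theorem not_linearIndependent_of_eta_null_orthogonal {x y : Fin 5 → ℝ} (hx : eta x x = 0)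
    (hy : eta y y = 0) (hxy : eta x y = 0) : ¬ LinearIndependent ℝ ![x, y] := by
  rw [LinearIndependent.pair_iff]
  push Not
  by_cases h : y 0 = 0 ∧ x 0 = 0
  · refine ⟨1, 0, ?_, by simp⟩
    simpa using eq_zero_of_eta_self_eq_zero h.2 hx
  · refine ⟨y 0, -x 0, ?_, by simpa [not_and_or] using h⟩
    rw [neg_smul, ← sub_eq_add_neg]
    -- this combination has no time component
    refine eq_zero_of_eta_self_eq_zero
      (by simp only [Pi.sub_apply, Pi.smul_apply, smul_eq_mul]; ring) ?_
    rw [eta_smul_sub_smul_self, hx, hy, hxy]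
    ring

theorem no_segre_type_32 (R : (Fin 5 → ℝ) →ₗ[ℝ] (Fin 5 → ℝ))
    (hR : ∀ u v : Fin 5 → ℝ, eta (R u) v = eta u (R v)) (lam1 lam2 : ℝ) :
    ¬ ∃ X1 X2 X3 X4 X5 : Fin 5 → ℝ,
      (LinearIndependent ℝ ![X1, X2, X3, X4, X5] ∧
        Submodule.span ℝ {X1, X2, X3, X4, X5} = ⊤) ∧
      R X1 = lam1 • X1 ∧
      R X2 = lam1 • X2 + X1 ∧
      R X3 = lam1 • X3 + X2 ∧
      R X4 = lam2 • X4 ∧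
      R X5 = lam2 • X5 + X4 := by
  rintro ⟨X1, X2, X3, X4, X5, ⟨hli, -⟩, h1, h2, -, h4, h5⟩
  have hsymm : etaBilin.IsSelfAdjoint R := hR
  refine not_linearIndependent_of_eta_null_orthogonal
    (hsymm.apply_self_eq_zero_of_jordan_chain h1 h2)
    (hsymm.apply_self_eq_zero_of_jordan_chain h4 h5)
    (hsymm.apply_eq_zero_of_jordan_chain_of_eigenvector h1 h2 h4) ?_
  convert hli.comp ![0, 3] (by decide) using 1
  ext i
  fin_cases i <;> rfl
end

section
/- Let R be an η-symmetric linear operator on ℝ^5 and suppose there exist real numbers λ1, λ3, λ4, λ5 and a basis X1, X2, X3, X4, X5 of ℝ^5 satisfying R X1 = λ1 X1, R X2 = λ1 X2 + X1, R X3 = λ3 X3, R X4 = λ4 X4 and R X5 = λ5 X5 (a Jordan structure of Segre type [2111] or a degeneracy thereof, with exactly four independent eigenvectors). Then there exists a semi-null pentad (l, m, x, y, z), a sign ε ∈ {1, -1}, and real numbers ρ1, ρ3, ρ4, ρ5 such that for all u, v: η(R u, v) = ρ1(η(l,u)η(m,v)+η(m,u)η(l,v)) + ε η(l,u)η(l,v)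 + ρ3 η(x,u)η(x,v) + ρ4 η(y,u)η(y,v) + ρ5 η(z,u)η(z,v). (Canonical form for Segre type [2111].) -/
/-- A semi-null pentad: η(l,m) = η(x,x) = η(y,y) = η(z,z) = 1 and all other
pairwise inner products among l, m, x, y, z vanish. -/
def SemiNullPentad (l m x y z : Fin 5 → ℝ) : Prop :=
  eta l m = 1 ∧ eta x x = 1 ∧ eta y y = 1 ∧ eta z z = 1 ∧
  eta l l = 0 ∧ eta m m = 0 ∧
  eta l x = 0 ∧ eta l y = 0 ∧ eta l z = 0 ∧
  eta m x = 0 ∧ eta m y = 0 ∧ eta m z = 0 ∧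
  eta x y = 0 ∧ eta x z = 0 ∧ eta y z = 0

open Submodule (span span_mono subset_span smul_mem mem_span_singleton mem_top span_induction)

section Eta

variable {v w : Fin 5 → ℝ}

lemma eta_comm (u v : Fin 5 → ℝ) : eta u v = eta v u := by
  simp only [eta]; ring

@[simp] lemma eta_add_left (u w v : Fin 5 → ℝ) : eta (u + w) v = eta u v + eta w v := by
  simp only [eta, Pi.add_apply]; ring

@[simp] lemma eta_add_right (u v w : Fin 5 → ℝ) : eta u (v + w) = eta u v + eta u w := by
  simp only [eta, Pi.add_apply]; ring

@[simp] lemma eta_sub_left (u w v : Fin 5 → ℝ) : eta (u - w) v = eta u v - eta w v := by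
  simp only [eta, Pi.sub_apply]; ring

@[simp] lemma eta_sub_right (u v w : Fin 5 → ℝ) : eta u (v - w) = eta u v - eta u w := by
  simp only [eta, Pi.sub_apply]; ring

@[simp] lemma eta_smul_left (c : ℝ) (u v : Fin 5 → ℝ) : eta (c • u) v = c * eta u v := by
  simp only [eta, Pi.smul_apply, smul_eq_mul]; ring

@[simp] lemma eta_smul_right (c : ℝ) (u v : Fin 5 → ℝ) : eta u (c • v) = c * eta u v := by
  simp only [eta, Pi.smul_apply, smul_eq_mul]; ring

lemma eq_zero_of_forall_eta_eq_zero (h : ∀ u, eta u v = 0) : v = 0 := by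
  funext i
  have := h (Pi.single i 1)
  fin_cases i <;> simpa [eta] using this

lemma eq_zero_of_eta_eq_zero_of_span_eq_top {s : Set (Fin 5 → ℝ)} (hs : span ℝ s = ⊤)
    (h : ∀ u ∈ s, eta u v = 0) : v = 0 := by
  refine eq_zero_of_forall_eta_eq_zero fun u => ?_
  have hu : u ∈ span ℝ s := hs ▸ mem_top
  induction hu using span_induction with
  | mem u hu => exact h u hu
  | zero => simp [eta]
  | add u w _ _ hu hw => rw [eta_add_left, hu, hw, add_zero]
  | smul c u _ hu => rw [eta_smul_left, hu, mul_zero]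

lemma eq_zero_of_apply_zero_of_eta_self_nonpos (h0 : v 0 = 0) (h : eta v v ≤ 0) : v = 0 := by
  simp only [eta, h0] at h
  funext i
  fin_cases i <;> simp only [Fin.zero_eta, Fin.mk_one, Fin.reduceFinMk, Pi.zero_apply, h0] <;>
    nlinarith [sq_nonneg (v 1), sq_nonneg (v 2), sq_nonneg (v 3), sq_nonneg (v 4)]

lemma eta_self_pos_of_eta_eq_zero {n : Fin 5 → ℝ} (hn : n ≠ 0) (hnn : eta n n = 0)
    (hwn : eta w n = 0) (hw : w ∉ ℝ ∙ n) : 0 < eta w w := by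
  by_contra! hww
  have hn0 : n 0 ≠ 0 := fun h => hn (eq_zero_of_apply_zero_of_eta_self_nonpos h hnn.le)
  -- subtracting the right multiple of `n` kills the time component without changing `eta w w`
  set t := w 0 / n 0
  have hd : w - t • n = 0 := by
    refine eq_zero_of_apply_zero_of_eta_self_nonpos ?_ ?_
    · simp [t, hn0]
    · simpa [hnn, hwn, eta_comm n w] using hww
  exact hw (mem_span_singleton.mpr ⟨t, (sub_eq_zero.mp hd).symm⟩)

end Eta

lemma exists_eta_smul_self_eq_one {w : Fin 5 → ℝ} (hw : 0 < eta w w) :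
    ∃ c : ℝ, eta (c • w) (c • w) = 1 := by
  refine ⟨(√(eta w w))⁻¹, ?_⟩
  rw [eta_smul_left, eta_smul_right, ← mul_assoc, ← sq, inv_pow, Real.sq_sqrt hw.le,
    inv_mul_cancel₀ hw.ne']

lemma exists_sq_mul_eq_one_or_neg_one {k : ℝ} (hk : k ≠ 0) :
    ∃ s : ℝ, s ^ 2 * k = 1 ∨ s ^ 2 * k = -1 := by
  refine ⟨(√|k|)⁻¹, ?_⟩
  rw [inv_pow, Real.sq_sqrt (abs_nonneg k)]
  rcases hk.lt_or_gt with hneg | hpos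
  · right; rw [abs_of_neg hneg]; field_simp
  · left; rw [abs_of_pos hpos]; field_simp

/-- The component of `w` orthogonal to `v`, when `eta v v = 1`. -/
def reject (v w : Fin 5 → ℝ) : Fin 5 → ℝ := w - eta v w • v

section Reject

variable {u v w : Fin 5 → ℝ}

lemma eta_reject_self (hv : eta v v = 1) : eta v (reject v w) = 0 := by
  simp [reject, hv]

lemma eta_reject_of_eta_eq_zero (huv : eta u v = 0) : eta u (reject v w) = eta u w := by
  simp [reject, huv]

lemma reject_mem {S : Submodule ℝ (Fin 5 → ℝ)} (hv : v ∈ S) (hw : w ∈ S) : reject v w ∈ S :=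
  S.sub_mem hw (S.smul_mem _ hv)

lemma mem_of_reject_mem {S : Submodule ℝ (Fin 5 → ℝ)} (hv : v ∈ S) (h : reject v w ∈ S) :
    w ∈ S := by
  simpa [reject] using S.add_mem h (S.smul_mem (eta v w) hv)

end Reject

section Symmetric

variable {R : (Fin 5 → ℝ) →ₗ[ℝ] (Fin 5 → ℝ)} (hR : ∀ u v, eta (R u) v = eta u (R v))
  {n v w : Fin 5 → ℝ} {μ ν : ℝ}
include hR

lemma sub_mul_eta_eq (hv : R v = μ • v) (hw : R w = ν • w + n) :
    (μ - ν) * eta v w = eta v n := by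
  have := hR v w
  rw [hv, hw, eta_smul_left, eta_add_right, eta_smul_right] at this
  linear_combination this

lemma apply_reject (hv : R v = μ • v) (hw : R w = ν • w + n)
    (hvn : eta v n = 0) : R (reject v w) = ν • reject v w + n := by
  have hc : eta v w * μ = ν * eta v w := by
    linear_combination sub_mul_eta_eq hR hv hw + hvn
  rw [reject, map_sub, map_smul, hv, hw, smul_smul, hc]
  module

lemma apply_reject_of_eigen (hv : R v = μ • v) (hw : R w = ν • w) :
    R (reject v w) = ν • reject v w := by
  simpa using apply_reject hR hv (n := 0) (by simpa using hw) (by simp [eta])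

variable {lam : ℝ} (hn : R n = lam • n) (hw : R w = lam • w + n)
include hn hw

lemma eta_self_eq_zero_of_jordan : eta n n = 0 := by
  simpa using (sub_mul_eta_eq hR hn hw).symm

lemma eta_eq_zero_of_jordan_of_eigen (hv : R v = μ • v) : eta v n = 0 := by
  by_cases hμ : μ = lam
  · simpa [hμ] using (sub_mul_eta_eq hR hv hw).symm
  · have := sub_mul_eta_eq hR hv (n := 0) (by simpa using hn)
    simpa [eta, sub_ne_zero.mpr hμ] using this

end Symmetric

theorem exists_orthonormal_eigenvectors {R : (Fin 5 → ℝ) →ₗ[ℝ] (Fin 5 → ℝ)}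
    (hR : ∀ u v, eta (R u) v = eta u (R v)) {n X3 X4 X5 : Fin 5 → ℝ} {lam3 lam4 lam5 : ℝ}
    (hn : n ≠ 0) (hnn : eta n n = 0)
    (hperp : ∀ (e : Fin 5 → ℝ) (μ : ℝ), R e = μ • e → eta e n = 0)
    (h3 : R X3 = lam3 • X3) (h4 : R X4 = lam4 • X4) (h5 : R X5 = lam5 • X5)
    (hX3 : X3 ∉ ℝ ∙ n) (hX4 : X4 ∉ span ℝ {n, X3}) (hX5 : X5 ∉ span ℝ {n, X3, X4}) :
    ∃ x y z : Fin 5 → ℝ, R x = lam3 • x ∧ R y = lam4 • y ∧ R z = lam5 • z ∧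
      eta x x = 1 ∧ eta y y = 1 ∧ eta z z = 1 ∧ eta x y = 0 ∧ eta x z = 0 ∧ eta y z = 0 := by
  have normalize : ∀ {w : Fin 5 → ℝ} {μ : ℝ}, R w = μ • w → w ∉ ℝ ∙ n →
      ∃ c : ℝ, R (c • w) = μ • c • w ∧ eta (c • w) (c • w) = 1 := fun hw hwn =>
    (exists_eta_smul_self_eq_one (eta_self_pos_of_eta_eq_zero hn hnn (hperp _ _ hw) hwn)).imp
      fun c hc => ⟨by rw [map_smul, hw, smul_comm], hc⟩
  have hST : span ℝ {n, X3} ≤ span ℝ {n, X3, X4} := span_mono (by simp [Set.insert_subset_iff])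
  obtain ⟨a, hRx, hxx⟩ := normalize h3 hX3
  have hxT : a • X3 ∈ span ℝ {n, X3} := smul_mem _ _ (subset_span (by simp))
  obtain ⟨b, hRy, hyy⟩ := normalize (apply_reject_of_eigen hR hRx h4) fun h =>
    hX4 (mem_of_reject_mem hxT (span_mono (by simp) h))
  have hyS : b • reject (a • X3) X4 ∈ span ℝ {n, X3, X4} :=
    smul_mem _ _ (reject_mem (hST hxT) (subset_span (by simp)))
  obtain ⟨c, hRz, hzz⟩ := normalize (apply_reject_of_eigen hR hRy (apply_reject_of_eigen hR hRx h5))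
    fun h => hX5 (mem_of_reject_mem (hST hxT) (mem_of_reject_mem hyS (span_mono (by simp) h)))
  have hxy : eta (a • X3) (b • reject (a • X3) X4) = 0 := by
    rw [eta_smul_right, eta_reject_self hxx, mul_zero]
  refine ⟨_, _, _, hRx, hRy, hRz, hxx, hyy, hzz, hxy, ?_, ?_⟩
  · rw [eta_smul_right, eta_reject_of_eta_eq_zero hxy, eta_reject_self hxx, mul_zero]
  · rw [eta_smul_right, eta_reject_self hyy, mul_zero]

theorem exists_null_pair_of_jordan {R : (Fin 5 → ℝ) →ₗ[ℝ] (Fin 5 → ℝ)} {n w : Fin 5 → ℝ}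
    {lam : ℝ} (hn : R n = lam • n) (hnn : eta n n = 0) (hw : R w = lam • w + n)
    (hnw : eta n w ≠ 0) :
    ∃ (l m : Fin 5 → ℝ) (ε : ℝ), (ε = 1 ∨ ε = -1) ∧ R l = lam • l ∧ R m = lam • m + ε • l ∧
      eta l l = 0 ∧ eta m m = 0 ∧ eta l m = 1 ∧
      ∀ u, eta u n = 0 → eta u w = 0 → eta l u = 0 ∧ eta m u = 0 := by
  set k := eta n w
  set w₀ := w - (eta w w / (2 * k)) • n
  have hRw₀ : R w₀ = lam • w₀ + n := by
    rw [map_sub, map_smul, hw, hn]; module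
  have hw₀ : eta w₀ w₀ = 0 := by
    simp only [w₀, eta_sub_left, eta_sub_right, eta_smul_left, eta_smul_right, hnn,
      eta_comm w n]
    field_simp; ring
  have hnw₀ : eta n w₀ = k := by simp [w₀, hnn, k]
  obtain ⟨s, hs⟩ := exists_sq_mul_eq_one_or_neg_one hnw
  have hs0 : s ≠ 0 := by rintro rfl; norm_num at hs
  have hinv : (s * k)⁻¹ = s ^ 2 * k * s := by
    have hsq : (s ^ 2 * k) ^ 2 = 1 := by rcases hs with h | h <;> rw [h] <;> norm_num
    field_simp
    linear_combination -hsq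
  refine ⟨s • n, (s * k)⁻¹ • w₀, s ^ 2 * k, hs, ?_, ?_, ?_, ?_, ?_, fun u hun huw => ?_⟩
  · rw [map_smul, hn, smul_comm]
  · rw [map_smul, hRw₀, hinv]; module
  · simp [hnn]
  · simp [hw₀]
  · simp only [eta_smul_left, eta_smul_right, hnw₀]; field_simp
  · rw [eta_comm] at hun huw
    simp [w₀, hun, huw]

namespace SemiNullPentad

variable {l m x y z : Fin 5 → ℝ} (hP : SemiNullPentad l m x y z)
include hP

theorem linearIndependent : LinearIndependent ℝ ![l, m, x, y, z] := by
  obtain ⟨hlm, hxx, hyy, hzz, hll, hmm, hlx, hly, hlz, hmx, hmy, hmz, hxy, hxz, hyz⟩ := hP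
  rw [Fintype.linearIndependent_iff]
  intro c hc
  simp only [Fin.sum_univ_five, Matrix.cons_val_zero, Matrix.cons_val_one, Matrix.cons_val_two,
    Matrix.cons_val_three, Matrix.cons_val_four, Matrix.head_cons, Matrix.tail_cons] at hc
  have key : ∀ u, eta u (c 0 • l + c 1 • m + c 2 • x + c 3 • y + c 4 • z) = 0 := by
    intro u; rw [hc]; simp [eta]
  have h0 := key m
  have h1 := key l
  have h2 := key x
  have h3 := key y
  have h4 := key z
  simp only [eta_add_right, eta_smul_right, eta_comm m l, eta_comm x l, eta_comm y l,
    eta_comm z l, eta_comm x m, eta_comm y m, eta_comm z m, eta_comm y x, eta_comm z x,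
    eta_comm z y, hlm, hxx, hyy, hzz, hll, hmm, hlx, hly, hlz, hmx, hmy, hmz, hxy, hxz,
    hyz, mul_one, mul_zero, add_zero, zero_add] at h0 h1 h2 h3 h4
  intro i
  fin_cases i <;> assumption

theorem eq_sum (u : Fin 5 → ℝ) :
    u = eta m u • l + eta l u • m + eta x u • x + eta y u • y + eta z u • z := by
  have hspan := hP.linearIndependent.span_eq_top_of_card_eq_finrank (by simp)
  obtain ⟨hlm, hxx, hyy, hzz, hll, hmm, hlx, hly, hlz, hmx, hmy, hmz, hxy, hxz, hyz⟩ := hP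
  rw [← sub_eq_zero]
  refine eq_zero_of_eta_eq_zero_of_span_eq_top hspan ?_
  simp [eta_comm _ u, eta_comm m l, eta_comm x l, eta_comm y l,
    eta_comm z l, eta_comm x m, eta_comm y m, eta_comm z m, eta_comm y x, eta_comm z x,
    eta_comm z y, hlm, hxx, hyy, hzz, hll, hmm, hlx, hly, hlz, hmx, hmy, hmz, hxy, hxz, hyz]

end SemiNullPentad

theorem SemiNullPentad.eta_apply_eq {l m x y z : Fin 5 → ℝ} (hP : SemiNullPentad l m x y z)
    {R : (Fin 5 → ℝ) →ₗ[ℝ] (Fin 5 → ℝ)} {lam1 lam3 lam4 lam5 ε : ℝ}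
    (hl : R l = lam1 • l) (hm : R m = lam1 • m + ε • l)
    (hx : R x = lam3 • x) (hy : R y = lam4 • y) (hz : R z = lam5 • z) (u v : Fin 5 → ℝ) :
    eta (R u) v =
      lam1 * (eta l u * eta m v + eta m u * eta l v) + ε * (eta l u * eta l v) +
      lam3 * (eta x u * eta x v) + lam4 * (eta y u * eta y v) + lam5 * (eta z u * eta z v) := by
  conv_lhs => rw [hP.eq_sum u]
  simp only [map_add, map_smul, hl, hm, hx, hy, hz, smul_add, smul_smul, eta_add_left,
    eta_smul_left]
  ring

theorem canonical_form_2111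
    (R : (Fin 5 → ℝ) →ₗ[ℝ] (Fin 5 → ℝ))
    (hR : ∀ u v : Fin 5 → ℝ, eta (R u) v = eta u (R v))
    (lam1 lam3 lam4 lam5 : ℝ) (X1 X2 X3 X4 X5 : Fin 5 → ℝ)
    (hbasis : LinearIndependent ℝ ![X1, X2, X3, X4, X5] ∧
      Submodule.span ℝ {X1, X2, X3, X4, X5} = (⊤ : Submodule ℝ (Fin 5 → ℝ)))
    (h1 : R X1 = lam1 • X1) (h2 : R X2 = lam1 • X2 + X1)
    (h3 : R X3 = lam3 • X3) (h4 : R X4 = lam4 • X4) (h5 : R X5 = lam5 • X5) :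
    ∃ l m x y z : Fin 5 → ℝ, SemiNullPentad l m x y z ∧
      ∃ ε : ℝ, (ε = 1 ∨ ε = -1) ∧
        ∃ p1 p3 p4 p5 : ℝ, ∀ u v : Fin 5 → ℝ, eta (R u) v =
          p1 * (eta l u * eta m v + eta m u * eta l v) +
          ε * (eta l u * eta l v) +
          p3 * (eta x u * eta x v) + p4 * (eta y u * eta y v) +
          p5 * (eta z u * eta z v) := by
  obtain ⟨hind, hspan⟩ := hbasis
  have hX1 : X1 ≠ 0 := by simpa using hind.ne_zero 0
  have hnull : eta X1 X1 = 0 := eta_self_eq_zero_of_jordan hR h1 h2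
  have hperp : ∀ (e : Fin 5 → ℝ) (μ : ℝ), R e = μ • e → eta e X1 = 0 :=
    fun _ _ => eta_eq_zero_of_jordan_of_eigen hR h1 h2
  have hk : eta X1 X2 ≠ 0 := fun h => hX1 <| eq_zero_of_eta_eq_zero_of_span_eq_top hspan <| by
    simp [hnull, eta_comm X2, h, hperp _ _ h3, hperp _ _ h4, hperp _ _ h5]
  obtain ⟨x, y, z, hRx, hRy, hRz, hxx, hyy, hzz, hxy, hxz, hyz⟩ :=
    exists_orthonormal_eigenvectors hR hX1 hnull hperp h3 h4 h5
      (by simpa using hind.notMem_span_image (s := {0}) (x := 2) (by simp))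
      (by simpa [Set.image_insert_eq] using hind.notMem_span_image (s := {0, 2}) (x := 3) (by simp))
      (by simpa [Set.image_insert_eq] using
        hind.notMem_span_image (s := {0, 2, 3}) (x := 4) (by simp))
  set w := reject z (reject y (reject x X2))
  have hRw : R w = lam1 • w + X1 := apply_reject hR hRz
    (apply_reject hR hRy (apply_reject hR hRx h2 (hperp _ _ hRx)) (hperp _ _ hRy)) (hperp _ _ hRz)
  have hX1w : eta X1 w = eta X1 X2 := by
    simp [w, reject, eta_comm X1, hperp _ _ hRx, hperp _ _ hRy, hperp _ _ hRz]
  obtain ⟨l, m, ε, hε, hRl, hRm, hll, hmm, hlm, horth⟩ :=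
    exists_null_pair_of_jordan h1 hnull hRw (hX1w ▸ hk)
  obtain ⟨hlx, hmx⟩ := horth x (hperp _ _ hRx) <| by
    rw [eta_reject_of_eta_eq_zero hxz, eta_reject_of_eta_eq_zero hxy, eta_reject_self hxx]
  obtain ⟨hly, hmy⟩ := horth y (hperp _ _ hRy) <| by
    rw [eta_reject_of_eta_eq_zero hyz, eta_reject_self hyy]
  obtain ⟨hlz, hmz⟩ := horth z (hperp _ _ hRz) (eta_reject_self hzz)
  have hP : SemiNullPentad l m x y z :=
    ⟨hlm, hxx, hyy, hzz, hll, hmm, hlx, hly, hlz, hmx, hmy, hmz, hxy, hxz, hyz⟩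
  exact ⟨l, m, x, y, z, hP, ε, hε, lam1, lam3, lam4, lam5, hP.eta_apply_eq hRl hRm hRx hRy hRz⟩
end
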